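/- arXiv:1703.07930 — 11 statements merged into one kernel-verified Lean document; each statement's English description precedes it below -/
import Mathlib

section
/- Let p be a prime, n ≥ 1, and x = (x_0,…,x_{n−1}) ∈ 𝔽_p^n. Then, as an identity of values in 𝔽_p, max(x) = Σ_{t=1}^{p−1} ( 1 − Π_{i=0}^{n−1} L_t(x_i) ), where L_t(z) = Σ_{k=0}^{t−1} ( 1 − (z − k)^{p−1} ) is the polynomial expression of the low-pass function χ(z < t). -/
/-- The maximum of the components of `x`, where elements of `ZMod p` are
compared via their canonical natural-number representatives. -/
def fmax {p n : ℕ} (x : Fin n → ZMod p) : ZMod p :=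
  ((Finset.univ.sup fun i => (x i).val : ℕ) : ZMod p)

/-- The least index `i` with `x i = fmax x`, as a natural number. -/
noncomputable def argmaxN {p n : ℕ} (x : Fin n → ZMod p) : ℕ :=
  sInf {i : ℕ | ∃ h : i < n, x ⟨i, h⟩ = fmax x}

/-- The `r`-th digit of the base-`p` expansion of `k`, as an element of `ZMod p`. -/
def digitP (p k r : ℕ) : ZMod p := (((k / p ^ r) % p : ℕ) : ZMod p)

/-- Polynomial expression of the low-pass function `χ(z < t)`. -/
def Lp (p t : ℕ) (z : ZMod p) : ZMod p :=
  ∑ k ∈ Finset.range t, (1 - (z - (k : ZMod p)) ^ (p - 1))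

/-- Polynomial expression of the Kronecker delta `χ(z = t)`. -/
def deltaP (p t : ℕ) (z : ZMod p) : ZMod p := 1 - (z - (t : ZMod p)) ^ (p - 1)

/-!
By Fermat's little theorem `1 - (z - k)^(p-1)` is the indicator of `z = k`, so `Lp p t z`,
a sum of such indicators over `k < t ≤ p`, is the indicator of `z.val < t`. The product over
the coordinates is then the indicator of `max x < t`, and summing `1 - χ(max x < t)` over
`1 ≤ t ≤ p - 1` counts the `t` with `1 ≤ t ≤ max x`.
-/

open Finset

section

variable {p : ℕ} [Fact p.Prime]

theorem deltaP_eq_ite (t : ℕ) (z : ZMod p) : deltaP p t z = if z = t then 1 else 0 := by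
  unfold deltaP
  split_ifs with h
  · rw [h, sub_self, zero_pow (Nat.sub_ne_zero_of_lt (Fact.out : p.Prime).one_lt), sub_zero]
  · rw [ZMod.pow_card_sub_one_eq_one (sub_ne_zero.mpr h), sub_self]

theorem Lp_eq_sum_deltaP (t : ℕ) (z : ZMod p) : Lp p t z = ∑ k ∈ range t, deltaP p k z := rfl

theorem Lp_eq_ite {t : ℕ} (ht : t ≤ p) (z : ZMod p) : Lp p t z = if z.val < t then 1 else 0 := by
  have hval : ∀ k ∈ range t, (z = k ↔ z.val = k) := fun k hk => by
    rw [← (ZMod.val_injective p).eq_iff, ZMod.val_cast_of_lt ((mem_range.mp hk).trans_le ht)]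
  simp_rw [Lp_eq_sum_deltaP, deltaP_eq_ite]
  rw [sum_congr rfl fun k hk => if_congr (hval k hk) rfl rfl, sum_ite_eq]
  simp only [mem_range]

theorem prod_Lp_eq_ite {n t : ℕ} (ht₀ : 0 < t) (ht : t ≤ p) (x : Fin n → ZMod p) :
    ∏ i, Lp p t (x i) = if (univ.sup fun i => (x i).val) < t then 1 else 0 := by
  simp only [Lp_eq_ite ht, prod_boole, Finset.sup_lt_iff (bot_lt_iff_ne_bot.mpr ht₀.ne')]
  congr 1

end

theorem sum_Icc_one_sub_ite_lt {R : Type*} [Ring R] {M N : ℕ} (hMN : M ≤ N) :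
    ∑ t ∈ Icc 1 N, (1 - if M < t then (1 : R) else 0) = M := by
  have hfilter : (Icc 1 N).filter (fun t => t ≤ M) = Icc 1 M := by
    ext t
    simp only [mem_filter, mem_Icc]
    omega
  have hterm : ∀ t, (1 - if M < t then (1 : R) else 0) = if t ≤ M then 1 else 0 := fun t => by
    split_ifs <;> first | omega | simp
  simp only [hterm, sum_boole, hfilter, Nat.card_Icc, Nat.add_sub_cancel]

theorem max_lowpass_formula_general (p : ℕ) (hp : p.Prime) (n : ℕ)
    (x : Fin n → ZMod p) :
    fmax x = ∑ t ∈ Finset.Icc 1 (p - 1), (1 - ∏ i, Lp p t (x i)) := by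
  have : Fact p.Prime := ⟨hp⟩
  have hmax_lt : (univ.sup fun i => (x i).val) < p :=
    (Finset.sup_lt_iff hp.pos).mpr fun i _ => ZMod.val_lt (x i)
  rw [sum_congr rfl fun t ht => by
    rw [prod_Lp_eq_ite (mem_Icc.mp ht).1 ((mem_Icc.mp ht).2.trans (Nat.sub_le p 1)) x]]
  exact (sum_Icc_one_sub_ite_lt (Nat.le_sub_one_of_lt hmax_lt)).symm

theorem max_lowpass_formula (p : ℕ) (hp : p.Prime) (n : ℕ) (hn : 1 ≤ n)
    (x : Fin n → ZMod p) :
    fmax x = ∑ t ∈ Finset.Icc 1 (p - 1), (1 - ∏ i, Lp p t (x i)) :=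
  max_lowpass_formula_general p hp n x
end

section
/- Let p = 3, n ≥ 1, and x = (x_0,…,x_{n−1}) ∈ 𝔽_3^n. Then max(x) = ( Σ_{i=0}^{⌊n/2⌋} e_{2i}(x) ) · ( Σ_{i=0}^{n} e_i(x) ) − 1 in 𝔽_3, where e_i(x) denotes the i-th elementary symmetric polynomial in x_0,…,x_{n−1} (with e_0 = 1). Equivalently, max(x) = 2·( Π_{i=0}^{n−1} (1 + x_i)^2 + Π_{i=0}^{n−1} (1 − x_i^2) ) − 1. -/
/-- The `i`-th elementary symmetric polynomial of the components of `x`. -/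
def esymmF {p n : ℕ} (x : Fin n → ZMod p) (i : ℕ) : ZMod p :=
  ∑ s ∈ Finset.powersetCard i (Finset.univ : Finset (Fin n)), ∏ j ∈ s, x j

open Finset

lemma sum_filter_even_range_succ {M : Type*} [AddCommMonoid M] (n : ℕ) (f : ℕ → M) :
    ∑ j ∈ range (n + 1) with Even j, f j = ∑ i ∈ range (n / 2 + 1), f (2 * i) := by
  rw [← sum_image (g := (2 * ·)) fun a _ b _ h => by simpa using h]
  congr 1
  ext j
  simp only [mem_filter, mem_range, mem_image, Nat.even_iff]
  constructor
  · rintro ⟨hj, hev⟩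
    exact ⟨j / 2, by omega, by omega⟩
  · rintro ⟨i, hi, rfl⟩
    omega

section ElementarySymmetric

variable {p n : ℕ} (x : Fin n → ZMod p)

lemma esymmF_neg (i : ℕ) : esymmF (-x) i = (-1) ^ i * esymmF x i := by
  rw [esymmF, esymmF, mul_sum]
  refine sum_congr rfl fun t ht => ?_
  rw [← (mem_powersetCard.mp ht).2, ← prod_neg]
  rfl

lemma sum_esymmF_eq_prod_one_add : ∑ i ∈ range (n + 1), esymmF x i = ∏ i, (1 + x i) := by
  rw [prod_one_add, sum_powerset, card_univ, Fintype.card_fin]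
  rfl

lemma prod_one_sub_eq_sum_esymmF :
    ∏ i, (1 - x i) = ∑ i ∈ range (n + 1), (-1) ^ i * esymmF x i := by
  simpa [sub_eq_add_neg, esymmF_neg] using (sum_esymmF_eq_prod_one_add (-x)).symm

lemma prod_one_add_add_prod_one_sub :
    ∏ i, (1 + x i) + ∏ i, (1 - x i) = 2 * ∑ i ∈ range (n / 2 + 1), esymmF x (2 * i) := by
  rw [← sum_esymmF_eq_prod_one_add, prod_one_sub_eq_sum_esymmF, ← sum_add_distrib]
  calc ∑ j ∈ range (n + 1), (esymmF x j + (-1) ^ j * esymmF x j)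
      = ∑ j ∈ range (n + 1), if Even j then 2 * esymmF x j else 0 := by
        refine sum_congr rfl fun j _ => ?_
        rcases Nat.even_or_odd j with hj | hj
        · simp [hj, hj.neg_one_pow, two_mul]
        · simp [hj.neg_one_pow, Nat.not_even_iff_odd.mpr hj]
    _ = 2 * ∑ i ∈ range (n / 2 + 1), esymmF x (2 * i) := by
        rw [← sum_filter, sum_filter_even_range_succ, mul_sum]

end ElementarySymmetric

lemma prod_ite_val_lt {p n t : ℕ} (ht : 0 < t) (x : Fin n → ZMod p) :
    ∏ i, (if (x i).val < t then (1 : ZMod p) else 0) =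
      if univ.sup (fun i => (x i).val) < t then 1 else 0 := by
  simp [Fintype.prod_boole, Finset.sup_lt_iff ht]

lemma ZMod.one_add_sq_eq_ite_val_lt_two (a : ZMod 3) :
    (1 + a) ^ 2 = if a.val < 2 then 1 else 0 := by
  fin_cases a <;> rfl

lemma ZMod.one_sub_sq_eq_ite_val_lt_one (a : ZMod 3) :
    1 - a ^ 2 = if a.val < 1 then 1 else 0 := by
  fin_cases a <;> rfl

lemma fmax_zmod_three_eq {n : ℕ} (x : Fin n → ZMod 3) :
    fmax x = 2 * ((∏ i, (1 + x i) ^ 2) + ∏ i, (1 - (x i) ^ 2)) - 1 := by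
  simp_rw [ZMod.one_add_sq_eq_ite_val_lt_two, ZMod.one_sub_sq_eq_ite_val_lt_one,
    prod_ite_val_lt two_pos, prod_ite_val_lt one_pos]
  have hm : univ.sup (fun i => (x i).val) ≤ 2 :=
    Finset.sup_le fun i _ => Nat.le_of_lt_succ (x i).val_lt
  rw [fmax]
  generalize univ.sup (fun i => (x i).val) = m at hm ⊢
  interval_cases m <;> decide

theorem max_p_three_general (n : ℕ) (x : Fin n → ZMod 3) :
    fmax x =
        (∑ i ∈ Finset.range (n / 2 + 1), esymmF x (2 * i)) *
          (∑ i ∈ Finset.range (n + 1), esymmF x i) - 1 ∧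
      fmax x = 2 * ((∏ i, (1 + x i) ^ 2) + ∏ i, (1 - (x i) ^ 2)) - 1 := by
  refine ⟨?_, fmax_zmod_three_eq x⟩
  have hsq : ∏ i, (1 + x i) ^ 2 = (∏ i, (1 + x i)) ^ 2 := prod_pow _ _ _
  have hdiff : ∏ i, (1 - x i ^ 2) = (∏ i, (1 + x i)) * ∏ i, (1 - x i) := by
    rw [← prod_mul_distrib]
    exact prod_congr rfl fun i _ => by ring
  have h3 : (3 : ZMod 3) = 0 := rfl
  rw [fmax_zmod_three_eq, hsq, hdiff, sum_esymmF_eq_prod_one_add]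
  linear_combination 2 * (∏ i, (1 + x i)) * prod_one_add_add_prod_one_sub x +
    (∏ i, (1 + x i)) * (∑ i ∈ range (n / 2 + 1), esymmF x (2 * i)) * h3

theorem max_p_three (n : ℕ) (hn : 1 ≤ n) (x : Fin n → ZMod 3) :
    fmax x =
        (∑ i ∈ Finset.range (n / 2 + 1), esymmF x (2 * i)) *
          (∑ i ∈ Finset.range (n + 1), esymmF x i) - 1 ∧
      fmax x = 2 * ((∏ i, (1 + x i) ^ 2) + ∏ i, (1 - (x i) ^ 2)) - 1 :=
  max_p_three_general n x
end

section
/- Let p = 3, n ≥ 1, and x = (x_0,…,x_{n−1}) ∈ 𝔽_3^n. Then min(x) = Π_{i=0}^{n−1} x_i^2 + Π_{i=0}^{n−1} x_i(1 − x_i) in 𝔽_3. -/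
/-- The minimum of the components of `x`, via the canonical representatives. -/
noncomputable def fmin {p n : ℕ} (x : Fin n → ZMod p) : ZMod p :=
  ((sInf {m : ℕ | ∃ i, (x i).val = m} : ℕ) : ZMod p)

/-! Layer cake: `min x` counts the thresholds `t ∈ [1, p - 1]` lying below every `x i`. Over `𝔽₃`
the indicators of `1 ≤ z` and `2 ≤ z` are the polynomials `z²` and `z (1 - z)`, and a product of
indicators is the indicator of the conjunction. -/

open Finset

theorem Finset.card_filter_forall_le_eq_inf' {ι : Type*} [Fintype ι] [Nonempty ι] (f : ι → ℕ)
    {N : ℕ} (hN : ∀ i, f i ≤ N) :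
    #{t ∈ Icc 1 N | ∀ i, t ≤ f i} = univ.inf' univ_nonempty f := by
  have hle : univ.inf' univ_nonempty f ≤ N :=
    (inf'_le f (mem_univ (Classical.arbitrary ι))).trans (hN _)
  have : {t ∈ Icc 1 N | ∀ i, t ≤ f i} = Icc 1 (univ.inf' univ_nonempty f) := by
    ext t
    simp only [mem_filter, mem_Icc, le_inf'_iff, mem_univ, true_implies]
    constructor
    · rintro ⟨⟨h1, -⟩, h⟩
      exact ⟨h1, h⟩
    · rintro ⟨h1, h⟩
      exact ⟨⟨h1, ((le_inf'_iff _ _).2 fun i _ => h i).trans hle⟩, h⟩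
  rw [this, Nat.card_Icc, Nat.add_sub_cancel]

theorem fmin_eq_inf' {p n : ℕ} [Nonempty (Fin n)] (x : Fin n → ZMod p) :
    fmin x = ((univ.inf' univ_nonempty fun i => (x i).val : ℕ) : ZMod p) := by
  rw [fmin, inf'_eq_csInf_image, coe_univ, Set.image_univ]
  rfl

theorem fmin_eq_sum_prod_ite {p n : ℕ} [NeZero p] [Nonempty (Fin n)] (x : Fin n → ZMod p) :
    fmin x = ∑ t ∈ Icc 1 (p - 1), ∏ i, if t ≤ (x i).val then 1 else 0 := by
  have hval : ∀ i, (x i).val ≤ p - 1 := fun i => Nat.le_sub_one_of_lt (ZMod.val_lt _)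
  simp only [Fintype.prod_boole]
  rw [fmin_eq_inf', ← card_filter_forall_le_eq_inf' _ hval, natCast_card_filter]

theorem ZMod.three_ite_one_le_val (z : ZMod 3) : (if 1 ≤ z.val then 1 else 0) = z ^ 2 := by
  decide +revert

theorem ZMod.three_ite_two_le_val (z : ZMod 3) : (if 2 ≤ z.val then 1 else 0) = z * (1 - z) := by
  decide +revert

theorem min_p_three (n : ℕ) (hn : 1 ≤ n) (x : Fin n → ZMod 3) :
    fmin x = (∏ i, (x i) ^ 2) + ∏ i, (x i * (1 - x i)) := by
  have : Nonempty (Fin n) := ⟨⟨0, hn⟩⟩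
  rw [fmin_eq_sum_prod_ite, show Icc 1 (3 - 1) = {1, 2} from rfl,
    sum_pair (by decide : (1 : ℕ) ≠ 2)]
  simp only [ZMod.three_ite_one_le_val, ZMod.three_ite_two_le_val]
end

section
/- Let p = 2, r ≥ 0, and let k ≥ 0 and n be integers with 2^{r+1}·k + 2^r ≤ n < 2^{r+1}·(k+1) (i.e., the r-th binary digit of n equals 1). Then for all x_0,…,x_n ∈ 𝔽_2: argmax^{(r)}(x_0, x_1, …, x_n) = Σ_{j=0}^{k} Σ_{i=0}^{min(2^r − 1, n − 2^{r+1}j − 2^r)} (1 + x_0)(1 + x_1)⋯(1 + x_{2^{r+1}j + 2^r + i − 1}) · x_{2^{r+1}j + 2^r + i} in 𝔽_2. -/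
/-!
Over `𝔽₂` a nonzero vector has maximum `1`, so its argmax is the first index `a` with
`x a = 1`, and `(∏ m < t, (1 + x m)) * x t` is the indicator of `t = a`. The indices
`2 ^ (r + 1) * j + 2 ^ r + i` of the double sum run exactly once through the `t ≤ n` whose
`r`-th binary digit is `1`, so the sum is that digit of `a`. A zero vector has argmax `0`, and
then every summand vanishes.
-/

open Finset

lemma fmax_eq_of_forall_val_le {p n : ℕ} [NeZero p] (x : Fin n → ZMod p) (i : Fin n)
    (h : ∀ j, (x j).val ≤ (x i).val) : fmax x = x i := by
  have hsup : (univ.sup fun j => (x j).val) = (x i).val :=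
    le_antisymm (Finset.sup_le fun j _ => h j) (le_sup (f := fun j => (x j).val) (mem_univ i))
  rw [fmax, hsup, ZMod.natCast_zmod_val]

lemma argmaxN_eq_of_isLeast {p n : ℕ} (x : Fin n → ZMod p) {a : ℕ} (ha : a < n)
    (hxa : x ⟨a, ha⟩ = fmax x) (hlt : ∀ i (hi : i < a), x ⟨i, hi.trans ha⟩ ≠ fmax x) :
    argmaxN x = a :=
  IsLeast.csInf_eq ⟨⟨ha, hxa⟩, fun _ ⟨_, hxi⟩ => not_lt.mp fun hia => hlt _ hia hxi⟩

lemma argmaxN_eq_zero_of_forall_eq_zero {p n : ℕ} [NeZero p] (x : Fin (n + 1) → ZMod p)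
    (h : ∀ i, x i = 0) : argmaxN x = 0 := by
  have hmax : fmax x = x 0 := fmax_eq_of_forall_val_le x 0 fun j => by simp [h]
  exact argmaxN_eq_of_isLeast x _ hmax.symm fun i hi => absurd hi i.not_lt_zero

lemma argmaxN_zmod_two_eq {n a : ℕ} (x : Fin n → ZMod 2) (ha : a < n) (hxa : x ⟨a, ha⟩ = 1)
    (hlt : ∀ i (hi : i < a), x ⟨i, hi.trans ha⟩ = 0) : argmaxN x = a := by
  have hmax : fmax x = x ⟨a, ha⟩ := fmax_eq_of_forall_val_le x _ fun j => by
    simpa [hxa, ZMod.val_one] using Nat.lt_succ_iff.mp (ZMod.val_lt (x j))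
  exact argmaxN_eq_of_isLeast x ha hmax.symm fun i hi => by simp [hmax, hxa, hlt i hi]

lemma ZMod.two_eq_zero_or_one (b : ZMod 2) : b = 0 ∨ b = 1 := by
  fin_cases b
  exacts [Or.inl rfl, Or.inr rfl]

lemma digitP_two (a r : ℕ) : digitP 2 a r = if a / 2 ^ r % 2 = 1 then 1 else 0 := by
  rcases Nat.mod_two_eq_zero_or_one (a / 2 ^ r) with h | h <;> simp [digitP, h]

lemma prod_one_add_mul_eq_ite {x : ℕ → ZMod 2} {a : ℕ} (hxa : x a = 1)
    (hlt : ∀ m < a, x m = 0) (t : ℕ) :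
    (∏ m ∈ range t, (1 + x m)) * x t = if t = a then 1 else 0 := by
  rcases lt_trichotomy t a with hta | rfl | hat
  · rw [hlt t hta, mul_zero, if_neg hta.ne]
  · rw [if_pos rfl, hxa, mul_one]
    exact prod_eq_one fun m hm => by rw [hlt m (mem_range.mp hm), add_zero]
  · rw [prod_eq_zero (mem_range.mpr hat) (by rw [hxa]; decide), zero_mul, if_neg hat.ne']

section Blocks

variable {r : ℕ}

lemma two_pow_succ_mul_add_two_pow_add_div {j i : ℕ} (hi : i < 2 ^ r) :
    (2 ^ (r + 1) * j + 2 ^ r + i) / 2 ^ r = 2 * j + 1 := by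
  have h : 2 ^ (r + 1) * j + 2 ^ r + i = i + 2 ^ r * (2 * j + 1) := by ring
  rw [h, Nat.add_mul_div_left _ _ (by positivity), Nat.div_eq_of_lt hi, zero_add]

lemma two_pow_succ_mul_add_two_pow_add_mod {j i : ℕ} (hi : i < 2 ^ r) :
    (2 ^ (r + 1) * j + 2 ^ r + i) % 2 ^ r = i := by
  have h : 2 ^ (r + 1) * j + 2 ^ r + i = i + 2 ^ r * (2 * j + 1) := by ring
  rw [h, Nat.add_mul_mod_self_left, Nat.mod_eq_of_lt hi]

lemma div_two_pow_succ (t : ℕ) : t / 2 ^ (r + 1) = t / 2 ^ r / 2 := by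
  rw [pow_succ, Nat.div_div_eq_div_mul]

lemma two_pow_succ_mul_add_two_pow_add_of_bit {t : ℕ} (ht : t / 2 ^ r % 2 = 1) :
    2 ^ (r + 1) * (t / 2 ^ (r + 1)) + 2 ^ r + t % 2 ^ r = t := by
  have hq := Nat.div_add_mod (t / 2 ^ r) 2
  rw [ht] at hq
  calc 2 ^ (r + 1) * (t / 2 ^ (r + 1)) + 2 ^ r + t % 2 ^ r
      = 2 ^ r * (2 * (t / 2 ^ r / 2) + 1) + t % 2 ^ r := by rw [div_two_pow_succ]; ring
    _ = t := by rw [hq, Nat.div_add_mod]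

lemma sum_filter_bit_eq_sum_blocks {M : Type*} [AddCommMonoid M] (f : ℕ → M) {k n : ℕ}
    (h1 : 2 ^ (r + 1) * k + 2 ^ r ≤ n) (h2 : n < 2 ^ (r + 1) * (k + 1)) :
    ∑ t ∈ (range (n + 1)).filter (fun t => t / 2 ^ r % 2 = 1), f t =
      ∑ j ∈ range (k + 1), ∑ i ∈ range (min (2 ^ r - 1) (n - 2 ^ (r + 1) * j - 2 ^ r) + 1),
        f (2 ^ (r + 1) * j + 2 ^ r + i) := by
  rw [sum_sigma']
  have hpos : 0 < 2 ^ r := by positivity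
  refine sum_bij' (fun t _ => ⟨t / 2 ^ (r + 1), t % 2 ^ r⟩)
    (fun s _ => 2 ^ (r + 1) * s.1 + 2 ^ r + s.2) ?_ ?_ ?_ ?_ ?_
  · intro t ht
    simp only [mem_filter, mem_range] at ht
    have hdec := two_pow_succ_mul_add_two_pow_add_of_bit ht.2
    have hmod := Nat.mod_lt t hpos
    have hj : t / 2 ^ (r + 1) < k + 1 := by
      by_contra hk
      have := Nat.mul_le_mul_left (2 ^ (r + 1)) (not_lt.mp hk)
      omega
    simp only [mem_sigma, mem_range]
    omega
  · rintro ⟨j, i⟩ hs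
    simp only [mem_sigma, mem_range] at hs
    have hjk := Nat.mul_le_mul_left (2 ^ (r + 1)) (Nat.lt_succ_iff.mp hs.1)
    simp only [mem_filter, mem_range]
    rw [two_pow_succ_mul_add_two_pow_add_div (by omega)]
    omega
  · exact fun t ht => two_pow_succ_mul_add_two_pow_add_of_bit (mem_filter.mp ht).2
  · rintro ⟨j, i⟩ hs
    simp only [mem_sigma, mem_range] at hs
    have hi : i < 2 ^ r := by omega
    rw [div_two_pow_succ, two_pow_succ_mul_add_two_pow_add_div hi,
      two_pow_succ_mul_add_two_pow_add_mod hi]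
    simp only [Sigma.mk.injEq, heq_eq_eq, and_true]
    omega
  · exact fun t ht =>
      congrArg f (two_pow_succ_mul_add_two_pow_add_of_bit (mem_filter.mp ht).2).symm

end Blocks

theorem argmax_digit_p_two_recursive (r k n : ℕ)
    (h1 : 2 ^ (r + 1) * k + 2 ^ r ≤ n) (h2 : n < 2 ^ (r + 1) * (k + 1))
    (x : ℕ → ZMod 2) :
    digitP 2 (argmaxN fun i : Fin (n + 1) => x i) r =
      ∑ j ∈ Finset.range (k + 1),
        ∑ i ∈ Finset.range (min (2 ^ r - 1) (n - 2 ^ (r + 1) * j - 2 ^ r) + 1),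
          (∏ m ∈ Finset.range (2 ^ (r + 1) * j + 2 ^ r + i), (1 + x m)) *
            x (2 ^ (r + 1) * j + 2 ^ r + i) := by
  rw [← sum_filter_bit_eq_sum_blocks (fun t => (∏ m ∈ range t, (1 + x m)) * x t) h1 h2]
  by_cases hex : ∃ a, a ≤ n ∧ x a = 1
  · set a := Nat.find hex
    obtain ⟨han, hxa⟩ : a ≤ n ∧ x a = 1 := Nat.find_spec hex
    have hlt : ∀ m < a, x m = 0 := fun m hm =>
      (x m).two_eq_zero_or_one.resolve_right fun h => Nat.find_min hex hm ⟨by omega, h⟩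
    have hargmax := argmaxN_zmod_two_eq (fun i : Fin (n + 1) => x i) (Nat.lt_succ_of_le han) hxa
      fun i hi => hlt i hi
    simp [hargmax, prod_one_add_mul_eq_ite hxa hlt, digitP_two, han]
  · have hzero : ∀ m ≤ n, x m = 0 := fun m hm =>
      (x m).two_eq_zero_or_one.resolve_right fun h => hex ⟨m, hm, h⟩
    rw [argmaxN_eq_zero_of_forall_eq_zero _ fun i => hzero i (Nat.lt_succ_iff.mp i.isLt),
      digitP_two, Nat.zero_div, if_neg (by decide)]
    refine (sum_eq_zero fun t ht => ?_).symm
    rw [hzero t (Nat.lt_succ_iff.mp (mem_range.mp (mem_filter.mp ht).1)), mul_zero]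
end

section
/- Let p be a prime and y_0, y_1 ∈ 𝔽_p. Let φ_1(y_0, y_1) ∈ 𝔽_p be the carry of the addition of the representatives, i.e. φ_1(y_0,y_1) = 1 if the integer representatives of y_0 and y_1 sum to at least p, and φ_1(y_0,y_1) = 0 otherwise. Then φ_1(y_0, y_1) = Σ_{d=1}^{p−1} (−1)^d · d^{−1} · y_0 (y_0 − 1)⋯(y_0 − d + 1) · y_1 (y_1 − 1)⋯(y_1 − (p − d) + 1) in 𝔽_p, where d^{−1} is the inverse of d in 𝔽_p. -/
section Aux

lemma prod_range_cast_sub (p a d : ℕ) :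
    ∏ j ∈ Finset.range d, ((a : ZMod p) - (j : ZMod p)) = (a.descFactorial d : ZMod p) := by
  induction d with
  | zero => simp
  | succ d ih =>
    rw [Finset.prod_range_succ, ih, Nat.descFactorial_succ, Nat.cast_mul]
    rcases le_or_gt (d + 1) a with h | h
    · rw [Nat.cast_sub (by omega)]; ring
    · rcases lt_or_ge a d with h' | h'
      · simp [Nat.descFactorial_eq_zero_iff_lt.mpr h']
      · have : a = d := by omega
        subst this
        simp

lemma fac_mul_fac (p : ℕ) (hp : p.Prime) :
    ∀ d, 1 ≤ d → d ≤ p - 1 →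
      ((d.factorial : ZMod p)) * (((p - d).factorial : ZMod p)) = (-1) ^ d * (d : ZMod p) := by
  haveI : Fact p.Prime := ⟨hp⟩
  intro d
  induction d with
  | zero => omega
  | succ d ih =>
    intro _ hd1
    rcases Nat.eq_zero_or_pos d with rfl | hd
    · simp [ZMod.wilsons_lemma]
    · have hdp : d ≤ p - 1 := by omega
      have key := ih hd hdp
      have hsub : p - d = (p - (d + 1)) + 1 := by omega
      rw [hsub, Nat.factorial_succ, Nat.cast_mul] at key
      have hcast : (((p - (d + 1)) + 1 : ℕ) : ZMod p) = -(d : ZMod p) := by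
        have : ((p - (d + 1)) + 1) = p - d := by omega
        rw [this, Nat.cast_sub (by omega), ZMod.natCast_self, zero_sub]
      rw [hcast] at key
      have hdne : (d : ZMod p) ≠ 0 := by
        rw [Ne, ZMod.natCast_eq_zero_iff]
        intro hdvd
        have := Nat.le_of_dvd hd hdvd
        omega
      -- key : (d ! : ZMod p) * (-(d:ZMod p) * ((p - (d+1))! : ZMod p)) = (-1)^d * d
      have key2 : (d.factorial : ZMod p) * (((p - (d + 1)).factorial : ZMod p)) = (-1) ^ (d + 1) := by
        apply mul_left_cancel₀ (neg_ne_zero.mpr hdne)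
        rw [show -(d : ZMod p) * ((d.factorial : ZMod p) * ((p - (d + 1)).factorial : ZMod p)) =
          (d.factorial : ZMod p) * (-(d : ZMod p) * ((p - (d + 1)).factorial : ZMod p)) by ring,
          key]
        ring
      rw [Nat.factorial_succ, Nat.cast_mul, mul_assoc, key2]
      push_cast
      ring

lemma vandermonde_mid (p a b : ℕ) (hp : 2 ≤ p) (ha : a < p) (hb : b < p) :
    ∑ d ∈ Finset.Icc 1 (p - 1), a.choose d * b.choose (p - d) = (a + b).choose p := by
  rw [Nat.add_choose_eq,
    Finset.Nat.sum_antidiagonal_eq_sum_range_succ (fun i j => a.choose i * b.choose j)]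
  apply Finset.sum_subset
  · intro d hd
    rw [Finset.mem_Icc] at hd
    rw [Finset.mem_range]
    omega
  · intro d hd hnd
    rw [Finset.mem_range] at hd
    rw [Finset.mem_Icc] at hnd
    push_neg at hnd
    have hdp : d = 0 ∨ d = p := by omega
    rcases hdp with rfl | rfl
    · simp [Nat.choose_eq_zero_of_lt hb]
    · simp [Nat.choose_eq_zero_of_lt ha]

end Aux

/-- The carry of the addition of the canonical representatives of `y0` and `y1`. -/
def carry (p : ℕ) (y0 y1 : ZMod p) : ZMod p :=
  if p ≤ y0.val + y1.val then 1 else 0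

theorem carry_formula (p : ℕ) (hp : p.Prime) (y0 y1 : ZMod p) :
    carry p y0 y1 =
      ∑ d ∈ Finset.Icc 1 (p - 1),
        (-1) ^ d * (d : ZMod p)⁻¹ * (∏ j ∈ Finset.range d, (y0 - (j : ZMod p))) *
          ∏ j ∈ Finset.range (p - d), (y1 - (j : ZMod p)) := by
  haveI : Fact p.Prime := ⟨hp⟩
  set a := y0.val with ha
  set b := y1.val with hb
  have hap : a < p := ZMod.val_lt y0
  have hbp : b < p := ZMod.val_lt y1
  have hy0 : y0 = (a : ZMod p) := (ZMod.natCast_zmod_val y0).symm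
  have hy1 : y1 = (b : ZMod p) := (ZMod.natCast_zmod_val y1).symm
  have hterm : ∀ d ∈ Finset.Icc 1 (p - 1),
      (-1) ^ d * (d : ZMod p)⁻¹ * (∏ j ∈ Finset.range d, (y0 - (j : ZMod p))) *
          ∏ j ∈ Finset.range (p - d), (y1 - (j : ZMod p)) =
        ((a.choose d * b.choose (p - d) : ℕ) : ZMod p) := by
    intro d hd
    simp only [Finset.mem_Icc] at hd
    rw [hy0, hy1, prod_range_cast_sub, prod_range_cast_sub,
      Nat.descFactorial_eq_factorial_mul_choose, Nat.descFactorial_eq_factorial_mul_choose]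
    have hfac := fac_mul_fac p hp d hd.1 hd.2
    have hdne : (d : ZMod p) ≠ 0 := by
      rw [Ne, ZMod.natCast_eq_zero_iff]
      intro hdvd
      have := Nat.le_of_dvd (by omega) hdvd
      have := hp.two_le
      omega
    push_cast
    calc (-1) ^ d * (d : ZMod p)⁻¹ * ((d.factorial : ZMod p) * (a.choose d : ZMod p)) *
          (((p - d).factorial : ZMod p) * (b.choose (p - d) : ZMod p))
        = (-1) ^ d * (d : ZMod p)⁻¹ * ((d.factorial : ZMod p) * ((p - d).factorial : ZMod p)) *
            ((a.choose d : ZMod p) * (b.choose (p - d) : ZMod p)) := by ring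
      _ = (-1) ^ d * (d : ZMod p)⁻¹ * ((-1) ^ d * (d : ZMod p)) *
            ((a.choose d : ZMod p) * (b.choose (p - d) : ZMod p)) := by rw [hfac]
      _ = ((-1) ^ d * (-1) ^ d) * ((d : ZMod p)⁻¹ * (d : ZMod p)) *
            ((a.choose d : ZMod p) * (b.choose (p - d) : ZMod p)) := by ring
      _ = (a.choose d : ZMod p) * (b.choose (p - d) : ZMod p) := by
          rw [← pow_add, ← two_mul, pow_mul, neg_one_sq, one_pow,
            inv_mul_cancel₀ hdne, one_mul, one_mul]
  rw [Finset.sum_congr rfl hterm, ← Nat.cast_sum, vandermonde_mid p a b hp.two_le hap hbp]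
  -- Now: carry p y0 y1 = ((a+b).choose p : ZMod p)
  have hlucas : ((a + b).choose p : ZMod p) = (((a + b) / p : ℕ) : ZMod p) := by
    have h := (Choose.choose_modEq_choose_mod_mul_choose_div_nat (n := a + b) (k := p) (p := p))
    rw [ZMod.natCast_eq_natCast_iff]
    simpa [Nat.mod_self, Nat.div_self hp.pos] using h
  rw [hlucas, carry]
  rcases le_or_gt p (a + b) with h | h
  · have : (a + b) / p = 1 := Nat.div_eq_of_lt_le (by omega) (by omega)
    rw [if_pos h, this, Nat.cast_one]
  · rw [if_neg (by omega), Nat.div_eq_of_lt h, Nat.cast_zero]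
end

section
/- Let p be a prime and x_0, x_1 ∈ 𝔽_p. Then argmax^{(0)}(x_0, x_1) = Σ_{d=1}^{p−1} d^{−1} · (x_0 + 1)(x_0 + 2)⋯(x_0 + d) · x_1 (x_1 − 1)⋯(x_1 − (p − d) + 1) in 𝔽_p, where d^{−1} is the inverse of d in 𝔽_p. -/
section Aux

open Finset

variable {p : ℕ} [hp : Fact p.Prime]

/-- The right-hand side sum, as a function of the two arguments. -/
private def Sf (p : ℕ) (a b : ZMod p) : ZMod p :=
  ∑ d ∈ Finset.Icc 1 (p - 1),
    (d : ZMod p)⁻¹ * (∏ j ∈ Finset.Icc 1 d, (a + (j : ZMod p))) *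
      ∏ j ∈ Finset.range (p - d), (b - (j : ZMod p))

/-- The auxiliary sum appearing in the telescoping step. -/
private def Tf (p : ℕ) (a b : ZMod p) : ZMod p :=
  ∑ d ∈ Finset.Icc 1 (p - 1),
    (∏ j ∈ Finset.Icc 1 d, (a + (j : ZMod p))) *
      ∏ j ∈ Finset.range (p - 1 - d), (b - (j : ZMod p))

private lemma Sf_zero (a : ZMod p) : Sf p a 0 = 0 := by
  refine Finset.sum_eq_zero fun d hd => ?_
  simp only [Finset.mem_Icc] at hd
  have h1 : 0 ∈ Finset.range (p - d) := by
    simp only [Finset.mem_range]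
    have := hp.out.two_le
    omega
  rw [Finset.prod_eq_zero h1 (by simp)]
  ring

private lemma Sf_step (a b : ZMod p) : Sf p a (b + 1) - Sf p a b = - Tf p a b := by
  unfold Sf Tf
  rw [← Finset.sum_sub_distrib, ← Finset.sum_neg_distrib]
  refine Finset.sum_congr rfl fun d hd => ?_
  simp only [Finset.mem_Icc] at hd
  obtain ⟨hd1, hd2⟩ := hd
  have h2 := hp.out.two_le
  have hdp : d < p := by omega
  obtain ⟨k, hk⟩ : ∃ k, p - d = k + 1 := ⟨p - d - 1, by omega⟩
  have hk1 : p - 1 - d = k := by omega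
  have key : (∏ j ∈ Finset.range (p - d), ((b+1) - (j:ZMod p)))
      - ∏ j ∈ Finset.range (p - d), (b - (j:ZMod p))
      = ((p - d : ℕ) : ZMod p) * ∏ j ∈ Finset.range (p - 1 - d), (b - (j:ZMod p)) := by
    rw [hk, hk1, Finset.prod_range_succ', Finset.prod_range_succ]
    have e1 : ∀ j : ℕ, (b + 1 - ((j:ℕ)+1 : ℕ) : ZMod p) = b - j := by
      intro j; push_cast; ring
    simp only [e1, Nat.cast_zero, sub_zero, hk]
    push_cast
    ring
  have hpd : ((p - d : ℕ) : ZMod p) = - (d : ZMod p) := by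
    rw [Nat.cast_sub hdp.le, ZMod.natCast_self]; ring
  have hdne : (d : ZMod p) ≠ 0 := by
    rw [Ne, ZMod.natCast_eq_zero_iff]
    exact Nat.not_dvd_of_pos_of_lt (by omega) hdp
  have hinv : (d : ZMod p)⁻¹ * (d : ZMod p) = 1 := inv_mul_cancel₀ hdne
  calc (d : ZMod p)⁻¹ * (∏ j ∈ Finset.Icc 1 d, (a + (j : ZMod p))) *
          ∏ j ∈ Finset.range (p - d), (b + 1 - (j : ZMod p)) -
        (d : ZMod p)⁻¹ * (∏ j ∈ Finset.Icc 1 d, (a + (j : ZMod p))) *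
          ∏ j ∈ Finset.range (p - d), (b - (j : ZMod p))
      = (d : ZMod p)⁻¹ * (∏ j ∈ Finset.Icc 1 d, (a + (j : ZMod p))) *
        ((∏ j ∈ Finset.range (p - d), ((b+1) - (j:ZMod p)))
          - ∏ j ∈ Finset.range (p - d), (b - (j:ZMod p))) := by ring
    _ = ((d : ZMod p)⁻¹ * (d : ZMod p)) *
        (-((∏ j ∈ Finset.Icc 1 d, (a + (j : ZMod p))) *
          ∏ j ∈ Finset.range (p - 1 - d), (b - (j:ZMod p)))) := by
        rw [key, hpd]; ring
    _ = _ := by rw [hinv]; ring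

private lemma prodA_fact (α : ℕ) : ∀ d : ℕ,
    (∏ j ∈ Finset.Icc 1 d, (α + j)) * α.factorial = (α + d).factorial := by
  intro d
  induction d with
  | zero => simp
  | succ d ih =>
    rw [Finset.prod_Icc_succ_top (by omega : 1 ≤ d + 1), mul_right_comm, ih]
    rw [← Nat.add_assoc, Nat.factorial_succ, mul_comm]

private lemma prodC_fact (β : ℕ) : ∀ c : ℕ, c ≤ β →
    (∏ j ∈ Finset.range c, (β - j)) * (β - c).factorial = β.factorial := by
  intro c
  induction c with
  | zero => simp
  | succ c ih =>
    intro hc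
    have h1 : β - c = (β - (c+1)) + 1 := by omega
    have h2 : (β - c) * (β - (c+1)).factorial = (β - c).factorial := by
      rw [h1]; exact (Nat.factorial_succ _).symm
    rw [Finset.prod_range_succ, mul_assoc, h2, ih (by omega)]

private lemma factX : ∀ k : ℕ, k ≤ p - 1 →
    ((Nat.factorial (p - 1 - k) * Nat.factorial k : ℕ) : ZMod p) = (-1 : ZMod p) ^ (k + 1) := by
  intro k
  induction k with
  | zero => intro _; simpa using ZMod.wilsons_lemma p
  | succ k ih =>
    intro hk
    have h2 := hp.out.two_le
    have ih' := ih (by omega)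
    have e1 : p - 1 - k = (p - 1 - (k+1)) + 1 := by omega
    have hcast : ((p - 1 - k : ℕ) : ZMod p) = -((k:ZMod p) + 1) := by
      have h3 : p - 1 - k = p - (k + 1) := by omega
      rw [h3, Nat.cast_sub (by omega), ZMod.natCast_self]
      push_cast; ring
    have e3 : ((p - 1 - (k+1) : ℕ) : ZMod p) = -((k:ZMod p)+2) := by
      rw [e1] at hcast; push_cast at hcast ⊢; linear_combination hcast
    have hne : ((k:ZMod p) + 1) ≠ 0 := by
      have h4 : (((k+1 : ℕ)) : ZMod p) ≠ 0 := by
        rw [Ne, ZMod.natCast_eq_zero_iff]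
        exact Nat.not_dvd_of_pos_of_lt (by omega) (by omega)
      simpa using h4
    apply mul_left_cancel₀ hne
    have lhs : ((k:ZMod p) + 1) * ((Nat.factorial (p - 1 - (k+1)) * Nat.factorial (k+1) : ℕ) : ZMod p)
        = - (((Nat.factorial (p - 1 - k) * Nat.factorial k : ℕ)) : ZMod p) * ((k:ZMod p)+1) := by
      rw [e1]
      push_cast [Nat.factorial_succ]
      rw [e3]
      ring
    rw [lhs, ih']
    ring

private lemma fact_ne (m : ℕ) (hm : m < p) : ((m.factorial : ℕ) : ZMod p) ≠ 0 := by
  rw [Ne, ZMod.natCast_eq_zero_iff]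
  intro h
  exact absurd ((Nat.Prime.dvd_factorial hp.out).mp h) (by omega)

private lemma choose_p1 : ∀ α : ℕ, α ≤ p - 1 →
    (((p-1).choose α : ℕ) : ZMod p) = (-1 : ZMod p)^α := by
  intro α
  induction α with
  | zero => simp
  | succ α ih =>
    intro hα
    have h2 := hp.out.two_le
    have ih' := ih (by omega)
    have hne : (((α+1 : ℕ)) : ZMod p) ≠ 0 := by
      rw [Ne, ZMod.natCast_eq_zero_iff]
      exact Nat.not_dvd_of_pos_of_lt (by omega) (by omega)
    apply mul_right_cancel₀ hne
    have key := Nat.choose_succ_right_eq (p-1) α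
    have h5 : (((p-1).choose (α+1) * (α+1) : ℕ) : ZMod p)
        = (((p-1).choose α * (p-1-α) : ℕ) : ZMod p) := by rw [key]
    push_cast at h5 ⊢
    rw [h5, ih']
    have hcast : ((p - 1 - α : ℕ) : ZMod p) = -((α:ZMod p) + 1) := by
      have h3 : p - 1 - α = p - (α + 1) := by omega
      rw [h3, Nat.cast_sub (by omega), ZMod.natCast_self]
      push_cast; ring
    rw [hcast]
    ring

private lemma altsum (n : ℕ) (hn : 1 ≤ n) : ∀ K : ℕ,
    ∑ k ∈ Finset.range (K+1), (-1 : ZMod p)^k * ((n.choose k : ℕ) : ZMod p)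
      = (-1 : ZMod p)^K * (((n-1).choose K : ℕ) : ZMod p) := by
  intro K
  induction K with
  | zero => simp
  | succ K ih =>
    rw [Finset.sum_range_succ, ih]
    obtain ⟨m, rfl⟩ : ∃ m, n = m + 1 := ⟨n - 1, by omega⟩
    simp only [Nat.add_sub_cancel]
    rw [Nat.choose_succ_succ' m K]
    push_cast
    ring

private lemma neg_one_p1 : (-1 : ZMod p)^(p-1) = 1 := by
  rcases hp.out.eq_two_or_odd' with h2 | hodd
  · subst h2; rfl
  · exact (Nat.Odd.sub_odd hodd odd_one).neg_one_pow

private lemma Tf_eq (a b : ZMod p) :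
    Tf p a b = (if b = -1 then 1 else 0) - (if a = b then 1 else 0) := by
  have h2 := hp.out.two_le
  set α := a.val with hαdef
  set β := b.val with hβdef
  have ha : ((α : ℕ) : ZMod p) = a := ZMod.natCast_rightInverse a
  have hb : ((β : ℕ) : ZMod p) = b := ZMod.natCast_rightInverse b
  have hαp : α < p := ZMod.val_lt a
  have hβp : β < p := ZMod.val_lt b
  have hm1 : (((p-1 : ℕ)) : ZMod p) = -1 := by
    rw [Nat.cast_sub (by omega), ZMod.natCast_self]; push_cast; ring
  have hbneg : (b = -1) ↔ (β = p - 1) := by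
    constructor
    · intro h; rw [← hm1] at h
      have := congrArg ZMod.val h
      rwa [ZMod.val_cast_of_lt (by omega)] at this
    · intro h; rw [← hb, h, hm1]
  have hab : (a = b) ↔ (α = β) := by
    constructor
    · intro h; rw [hαdef, hβdef, h]
    · intro h; rw [← ha, ← hb, h]
  obtain ⟨M, hM1, hM2, hM3⟩ : ∃ M, M ≤ β ∧ M ≤ p - 2 ∧ (β ≤ M ∨ p - 2 ≤ M) := by
    refine ⟨min β (p - 2), min_le_left _ _, min_le_right _ _, ?_⟩
    rcases le_total β (p - 2) with h | h
    · exact Or.inl (by rw [min_eq_left h])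
    · exact Or.inr (by rw [min_eq_right h])
  have hsub : Finset.Icc (p-1-M) (p-1-α) ⊆ Finset.Icc 1 (p-1) := by
    intro d hd; simp only [Finset.mem_Icc] at hd ⊢; omega
  have hvan : ∀ d ∈ Finset.Icc 1 (p-1), d ∉ Finset.Icc (p-1-M) (p-1-α) →
      (∏ j ∈ Finset.Icc 1 d, (a + (j : ZMod p))) *
        ∏ j ∈ Finset.range (p - 1 - d), (b - (j : ZMod p)) = 0 := by
    intro d hd hnd
    simp only [Finset.mem_Icc] at hd hnd
    by_cases hc : p - α ≤ d
    · have hmem : p - α ∈ Finset.Icc 1 d := by simp only [Finset.mem_Icc]; omega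
      rw [Finset.prod_eq_zero hmem (by
        rw [← ha, ← Nat.cast_add, show α + (p - α) = p by omega, ZMod.natCast_self]), zero_mul]
    · have hβlt : β < p - 1 - d := by omega
      have hmem : β ∈ Finset.range (p - 1 - d) := Finset.mem_range.mpr hβlt
      rw [Finset.prod_eq_zero hmem (by rw [← hb, sub_self]), mul_zero]
  have step1 : Tf p a b = ∑ d ∈ Finset.Icc (p-1-M) (p-1-α),
      (∏ j ∈ Finset.Icc 1 d, (a + (j : ZMod p))) *
        ∏ j ∈ Finset.range (p - 1 - d), (b - (j : ZMod p)) :=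
    (Finset.sum_subset hsub hvan).symm
  have step2 : ∀ d ∈ Finset.Icc (p-1-M) (p-1-α),
      (∏ j ∈ Finset.Icc 1 d, (a + (j : ZMod p))) *
        ∏ j ∈ Finset.range (p - 1 - d), (b - (j : ZMod p))
      = (-1 : ZMod p)^((p-1-d) - α + 1) * ((β.choose α : ℕ) : ZMod p) *
          (((β - α).choose ((p-1-d) - α) : ℕ) : ZMod p) := by
    intro d hd
    simp only [Finset.mem_Icc] at hd
    set c := p - 1 - d with hcdef
    set k := c - α with hkdef
    have hcα : α ≤ c := by omega
    have hcM : c ≤ M := by omega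
    have hcβ : c ≤ β := by omega
    have hcp : c ≤ p - 2 := by omega
    have eA : (∏ j ∈ Finset.Icc 1 d, (a + (j:ZMod p)))
        = ((∏ j ∈ Finset.Icc 1 d, (α + j) : ℕ) : ZMod p) := by
      rw [← ha]; push_cast; rfl
    have eC : (∏ j ∈ Finset.range (p-1-d), (b - (j:ZMod p)))
        = ((∏ j ∈ Finset.range c, (β - j) : ℕ) : ZMod p) := by
      rw [Nat.cast_prod]
      refine Finset.prod_congr rfl fun j hj => ?_
      simp only [Finset.mem_range] at hj
      rw [Nat.cast_sub (by omega : j ≤ β), hb]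
    rw [eA, eC]
    have hβfact : β.factorial
        = β.choose α * (β - α).choose k * (α.factorial * (k.factorial * (β - c).factorial)) := by
      have t1 := Nat.choose_mul_factorial_mul_factorial (show α ≤ β by omega)
      have t2 := Nat.choose_mul_factorial_mul_factorial (show k ≤ β - α by omega)
      have e : β - α - k = β - c := by omega
      rw [e] at t2
      rw [← t1, ← t2]; ring
    have hNA : (∏ j ∈ Finset.Icc 1 d, (α + j)) * α.factorial = (p-1-k).factorial := by
      rw [prodA_fact]; congr 1; omega
    have hNC : (∏ j ∈ Finset.range c, (β - j)) * (β - c).factorial = β.factorial :=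
      prodC_fact β c hcβ
    have hne : ((α.factorial : ℕ) : ZMod p) * (((β - c).factorial : ℕ) : ZMod p) ≠ 0 :=
      mul_ne_zero (fact_ne _ (by omega)) (fact_ne _ (by omega))
    apply mul_right_cancel₀ hne
    calc ((∏ j ∈ Finset.Icc 1 d, (α + j) : ℕ) : ZMod p)
            * ((∏ j ∈ Finset.range c, (β - j) : ℕ) : ZMod p)
          * (((α.factorial : ℕ) : ZMod p) * (((β - c).factorial : ℕ) : ZMod p))
        = (((∏ j ∈ Finset.Icc 1 d, (α + j)) * α.factorial
            * ((∏ j ∈ Finset.range c, (β - j)) * (β - c).factorial) : ℕ) : ZMod p) := by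
          push_cast; ring
      _ = (((p-1-k).factorial * β.factorial : ℕ) : ZMod p) := by rw [hNA, hNC]
      _ = (((p-1-k).factorial * k.factorial : ℕ) : ZMod p) *
            ((β.choose α * (β - α).choose k * (α.factorial * (β - c).factorial) : ℕ) : ZMod p) := by
          rw [hβfact]; push_cast; ring
      _ = (-1 : ZMod p)^(k+1) *
            ((β.choose α * (β - α).choose k * (α.factorial * (β - c).factorial) : ℕ) : ZMod p) := by
          rw [factX k (by omega)]
      _ = (-1 : ZMod p)^(k + 1) * ((β.choose α : ℕ) : ZMod p) * (((β - α).choose k : ℕ) : ZMod p)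
          * (((α.factorial : ℕ) : ZMod p) * (((β - c).factorial : ℕ) : ZMod p)) := by
          push_cast; ring
  rw [step1, Finset.sum_congr rfl step2]
  by_cases hαM : α ≤ M
  · have reidx : ∑ d ∈ Finset.Icc (p-1-M) (p-1-α),
        (-1 : ZMod p)^((p-1-d) - α + 1) * ((β.choose α : ℕ) : ZMod p) *
          (((β - α).choose ((p-1-d) - α) : ℕ) : ZMod p)
        = ∑ k ∈ Finset.range (M - α + 1),
        (-1 : ZMod p)^(k + 1) * ((β.choose α : ℕ) : ZMod p) *
          (((β - α).choose k : ℕ) : ZMod p) := by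
      refine Finset.sum_nbij' (fun d => (p-1-d) - α) (fun k => p-1-α-k) ?_ ?_ ?_ ?_ ?_
      · intro d hd; simp only [Finset.mem_Icc] at hd; simp only [Finset.mem_range]; omega
      · intro k hk; simp only [Finset.mem_range] at hk; simp only [Finset.mem_Icc]; omega
      · intro d hd; simp only [Finset.mem_Icc] at hd
        show p - 1 - α - (p - 1 - d - α) = d
        omega
      · intro k hk; simp only [Finset.mem_range] at hk
        show p - 1 - (p - 1 - α - k) - α = k
        omega
      · intro d hd; rfl
    rw [reidx]
    have sumfact : ∑ k ∈ Finset.range (M - α + 1),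
        (-1 : ZMod p)^(k + 1) * ((β.choose α : ℕ) : ZMod p) * (((β - α).choose k : ℕ) : ZMod p)
        = -((β.choose α : ℕ) : ZMod p) * ∑ k ∈ Finset.range (M - α + 1),
            (-1 : ZMod p)^k * (((β - α).choose k : ℕ) : ZMod p) := by
      rw [Finset.mul_sum]
      refine Finset.sum_congr rfl fun k hk => by ring
    rw [sumfact]
    by_cases hαβ : α = β
    · have hK : M - α + 1 = 1 := by omega
      rw [hK]
      simp only [Finset.sum_range_one, pow_zero, one_mul, Nat.choose_self, hαβ]
      rw [if_pos (hab.mpr hαβ), if_neg (by rw [hbneg]; omega)]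
      simp [Nat.sub_self]
    · have hαβ' : α < β := by omega
      rw [altsum (β - α) (by omega) (M - α)]
      by_cases hβ1 : β = p - 1
      · have hM : M = p - 2 := by omega
        have e1 : β - α - 1 = M - α := by omega
        rw [e1, Nat.choose_self]
        rw [if_pos (hbneg.mpr hβ1), if_neg (by rw [hab]; omega)]
        rw [hβ1, choose_p1 α (by omega)]
        have epow : (-1 : ZMod p) * ((-1 : ZMod p)^(M - α) * (-1 : ZMod p)^α)
            = -((-1 : ZMod p)^(p-2)) := by
          have e2 : M - α + α + 1 = (p-2) + 1 := by omega
          rw [← pow_add, ← pow_succ', e2, pow_succ]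
          ring
        calc -((-1:ZMod p)^α) * ((-1:ZMod p)^(M-α) * ((1:ℕ) : ZMod p))
            = (-1 : ZMod p) * ((-1 : ZMod p)^(M - α) * (-1 : ZMod p)^α) := by push_cast; ring
          _ = -((-1 : ZMod p)^(p-2)) := epow
          _ = 1 - 0 := by
              have h6 : (-1 : ZMod p) * (-1 : ZMod p)^(p-2) = (-1 : ZMod p)^(p-1) := by
                rw [← pow_succ']; congr 1; omega
              have h7 : -((-1 : ZMod p)^(p-2)) = (-1: ZMod p)^(p-1) := by rw [← h6]; ring
              rw [h7, neg_one_p1]; ring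
      · have hM : M = β := by omega
        have e1 : M - α = β - α := by omega
        rw [e1, Nat.choose_eq_zero_of_lt (by omega : β - α - 1 < β - α)]
        rw [if_neg (by rw [hbneg]; omega), if_neg (by rw [hab]; omega)]
        push_cast
        ring
  · have hempty : Finset.Icc (p-1-M) (p-1-α) = ∅ := by
      rw [Finset.Icc_eq_empty_iff]
      omega
    rw [hempty, Finset.sum_empty]
    by_cases hβ1 : β = p - 1
    · have h8 : α = β := by omega
      rw [if_pos (hbneg.mpr hβ1), if_pos (hab.mpr h8)]; ring
    · rw [if_neg (by rw [hbneg]; omega), if_neg (by rw [hab]; omega)]; ring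

private lemma Sf_nat (a : ZMod p) (B : ℕ) :
    Sf p a ((B : ℕ) : ZMod p) = ∑ k ∈ Finset.range B,
      ((if a = (k : ZMod p) then (1 : ZMod p) else 0)
        - (if ((k : ZMod p)) = -1 then (1 : ZMod p) else 0)) := by
  induction B with
  | zero => simpa using Sf_zero a
  | succ B ih =>
    have hc : ((B+1 : ℕ) : ZMod p) = (B : ZMod p) + 1 := by push_cast; ring
    rw [hc, Finset.sum_range_succ, ← ih]
    have hstep := Sf_step a (B : ZMod p)
    rw [Tf_eq] at hstep
    linear_combination hstep

private lemma Sf_val (x0 x1 : ZMod p) :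
    Sf p x0 x1 = if x0.val < x1.val then 1 else 0 := by
  have h2 := hp.out.two_le
  have hb : ((x1.val : ℕ) : ZMod p) = x1 := ZMod.natCast_rightInverse x1
  have hβ : x1.val < p := ZMod.val_lt x1
  have hm1 : (((p-1 : ℕ)) : ZMod p) = -1 := by
    rw [Nat.cast_sub (by omega), ZMod.natCast_self]; push_cast; ring
  rw [← hb, Sf_nat]
  have hterm : ∀ k ∈ Finset.range x1.val,
      (if x0 = (k : ZMod p) then (1:ZMod p) else 0) - (if ((k : ZMod p)) = -1 then (1:ZMod p) else 0)
        = if x0.val = k then 1 else 0 := by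
    intro k hk
    simp only [Finset.mem_range] at hk
    have hkp : k < p := by omega
    have h1 : ¬((k : ZMod p) = -1) := by
      intro h
      rw [← hm1] at h
      have := congrArg ZMod.val h
      rw [ZMod.val_cast_of_lt hkp, ZMod.val_cast_of_lt (by omega)] at this
      omega
    have hEq : (x0 = (k : ZMod p)) ↔ x0.val = k := by
      constructor
      · intro h; rw [h, ZMod.val_cast_of_lt hkp]
      · intro h; rw [← ZMod.natCast_rightInverse x0, h]
    rw [if_neg h1, if_congr hEq rfl rfl]
    ring
  rw [Finset.sum_congr rfl hterm, Finset.sum_ite_eq (Finset.range x1.val) x0.val (fun _ => (1:ZMod p))]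
  simp [Finset.mem_range]

private lemma sup_two (x0 x1 : ZMod p) :
    (Finset.univ.sup fun i => ((![x0,x1] i).val)) = max x0.val x1.val := by
  rw [show (Finset.univ : Finset (Fin 2)) = {0, 1} by rfl]
  rw [Finset.sup_insert, Finset.sup_singleton]
  simp [max_comm]

private lemma argmax_two (x0 x1 : ZMod p) :
    argmaxN ![x0, x1] = if x0.val < x1.val then 1 else 0 := by
  unfold argmaxN
  have key : ∀ S : Set ℕ, S = {i : ℕ | ∃ h : i < 2, ![x0, x1] ⟨i, h⟩ = fmax ![x0, x1]} →
      sInf S = if x0.val < x1.val then 1 else 0 := by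
    intro S hS
    split_ifs with h
    · have hf : fmax ![x0, x1] = x1 := by
        unfold fmax
        rw [sup_two, max_eq_right h.le, ZMod.natCast_rightInverse]
      have h1 : 1 ∈ S := by rw [hS]; exact ⟨one_lt_two, by rw [hf]; rfl⟩
      have h0 : 0 ∉ S := by
        rw [hS]
        rintro ⟨h', heq⟩
        rw [hf] at heq
        have hx : x0 = x1 := heq
        rw [hx] at h
        exact lt_irrefl _ h
      have hmem : sInf S ∈ S := Nat.sInf_mem ⟨1, h1⟩
      have hne : sInf S ≠ 0 := fun hm => h0 (hm ▸ hmem)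
      rw [hS] at hmem hne ⊢
      obtain ⟨hlt, -⟩ := hmem
      omega
    · have hf : fmax ![x0, x1] = x0 := by
        unfold fmax
        rw [sup_two, max_eq_left (not_lt.mp h), ZMod.natCast_rightInverse]
      apply Nat.sInf_eq_zero.mpr
      left
      rw [hS]
      exact ⟨two_pos, by rw [hf]; rfl⟩
  exact key _ rfl

end Aux

theorem argmax_two_variables (p : ℕ) (hp : p.Prime) (x0 x1 : ZMod p) :
    digitP p (argmaxN ![x0, x1]) 0 =
      ∑ d ∈ Finset.Icc 1 (p - 1),
        (d : ZMod p)⁻¹ * (∏ j ∈ Finset.Icc 1 d, (x0 + (j : ZMod p))) *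
          ∏ j ∈ Finset.range (p - d), (x1 - (j : ZMod p)) := by
  haveI : Fact p.Prime := ⟨hp⟩
  have hR : (∑ d ∈ Finset.Icc 1 (p - 1),
        (d : ZMod p)⁻¹ * (∏ j ∈ Finset.Icc 1 d, (x0 + (j : ZMod p))) *
          ∏ j ∈ Finset.range (p - d), (x1 - (j : ZMod p))) = Sf p x0 x1 := rfl
  rw [hR, Sf_val, argmax_two]
  have h2 := hp.two_le
  split_ifs
  · show (((1 / p ^ 0) % p : ℕ) : ZMod p) = 1
    rw [pow_zero, Nat.div_one, Nat.mod_eq_of_lt (by omega)]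
    exact Nat.cast_one
  · show (((0 / p ^ 0) % p : ℕ) : ZMod p) = 0
    simp
end

section
/- Let p ≥ 3 be a prime and x_0, x_1 ∈ 𝔽_p. Then max(x_0, x_1) = (x_1 − x_0) · Σ_{d=2}^{p−2} d^{−1} (x_0 + 1)(x_0 + 2)⋯(x_0 + d) · x_1 (x_1 − 1)⋯(x_1 − (p − d) + 1) + x_0 + (x_0 + 1)^2 (1 − (x_1 + 1)^{p−1}) + (1 − x_0^{p−1}) x_1^2 in 𝔽_p, where d^{−1} is the inverse of d in 𝔽_p. -/
/-!
Put `a = x₀.val`, `b = x₁.val` and `c = p - 1 - a`, so that `x₀ = -1 - c`. Then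
`(x₀ + 1)⋯(x₀ + d) = (-1)ᵈ d! C(c, d)` and `x₁(x₁ - 1)⋯(x₁ - (p - d) + 1) = (p - d)! C(b, p - d)`;
since `(d - 1)! (p - d)! = (-1)ᵈ` by Wilson's theorem, the `d`-th summand is just
`C(c, d) C(b, p - d)`. By Vandermonde the sum of these over `0 ≤ d ≤ p` is `C(c + b, p)`, which by
Lucas is `(c + b) / p = [a < b]` modulo `p`. The omitted terms `d = 1` and `d = p - 1` are
`c [x₁ = -1]` and `[x₀ = 0] b`, and the two correction terms of the formula cancel them, leaving
`x₀ + (x₁ - x₀) [a < b] = max a b`.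
-/

open Finset
open scoped Nat

theorem fmax_pair {p : ℕ} (x y : ZMod p) : fmax ![x, y] = ((max x.val y.val : ℕ) : ZMod p) := by
  simp [fmax, Fin.univ_succ]

theorem Finset.sum_range_succ_eq_sum_Icc_add_ends {M : Type*} [AddCommMonoid M] (f : ℕ → M)
    {n : ℕ} (hn : 3 ≤ n) :
    ∑ d ∈ range (n + 1), f d = ∑ d ∈ Icc 2 (n - 2), f d + (f 0 + f 1 + f (n - 1) + f n) := by
  obtain ⟨m, rfl⟩ := Nat.exists_eq_add_of_le' hn
  rw [show m + 3 - 2 = m + 1 by omega, show m + 3 - 1 = m + 2 by omega, ← Ico_add_one_right_eq_Icc,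
    sum_Ico_eq_sum_range, show m + 1 + 1 - 2 = m by omega, sum_range_succ, sum_range_succ,
    sum_range_succ', sum_range_succ']
  simp only [zero_add, add_assoc, one_add_one_eq_two, add_comm 2]
  abel

theorem Finset.prod_Icc_add_natCast_eq_neg_one_pow_mul_prod_range_sub {R : Type*} [CommRing R]
    (x : R) (d : ℕ) :
    ∏ j ∈ Icc 1 d, (x + j) = (-1) ^ d * ∏ j ∈ range d, (-1 - x - j) := by
  induction d with
  | zero => simp
  | succ d ih =>
    rw [prod_Icc_succ_top (by omega), ih, prod_range_succ]
    push_cast; ring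

theorem ZMod.natCast_choose_prime_eq_div {p : ℕ} [Fact p.Prime] (n : ℕ) :
    (n.choose p : ZMod p) = (n / p : ℕ) := by
  have hlucas := (ZMod.natCast_eq_natCast_iff _ _ _).mpr
    (Choose.choose_modEq_choose_mod_mul_choose_div_nat (n := n) (k := p) (p := p))
  simpa [Nat.div_self (Fact.out : p.Prime).pos] using hlucas

theorem ZMod.factorial_pred_mul_factorial_sub {p : ℕ} [Fact p.Prime] {d : ℕ} (hd0 : 0 < d)
    (hdp : d ≤ p) :
    ((d - 1)! * (p - d)! : ZMod p) = (-1) ^ d := by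
  have hwilson : ((d - 1)! * ((-1) ^ (p - d) * (p - d)!) : ZMod p) = -1 := by
    rw [← ZMod.cast_descFactorial (by omega), ← Nat.cast_mul, show d - 1 = p - 1 - (p - d) by omega,
      Nat.factorial_mul_descFactorial (by omega), ZMod.wilsons_lemma]
  have hsign : ((-1) ^ (p - d) * (-1) ^ d : ZMod p) = -1 := by
    rw [← pow_add, Nat.sub_add_cancel hdp, ZMod.pow_card]
  linear_combination -(-1 : ZMod p) ^ d * hwilson + ((d - 1)! * (p - d)! : ZMod p) * hsign

theorem ZMod.natCast_choose_sub_one_eq {p : ℕ} [Fact p.Prime] {n : ℕ} (hn : n < p) :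
    (n.choose (p - 1) : ZMod p) = 1 - ((n : ZMod p) + 1) ^ (p - 1) := by
  have hp := (Fact.out : p.Prime).one_lt
  rcases (show n ≤ p - 1 by omega).lt_or_eq with hlt | rfl
  · have hne : (n : ZMod p) + 1 ≠ 0 := by
      rw [← Nat.cast_succ, ne_eq, ZMod.natCast_eq_zero_iff]
      exact Nat.not_dvd_of_pos_of_lt n.succ_pos (by omega)
    rw [Nat.choose_eq_zero_of_lt hlt, ZMod.pow_card_sub_one_eq_one hne]
    simp
  · rw [Nat.choose_self, ← Nat.cast_add_one, Nat.sub_add_cancel hp.le, ZMod.natCast_self,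
      zero_pow (by omega)]
    simp

theorem ZMod.mul_one_sub_pow_card_sub_one_eq_zero {p : ℕ} [Fact p.Prime] (x : ZMod p) :
    x * (1 - x ^ (p - 1)) = 0 := by
  rw [mul_sub, mul_one, ← pow_succ', Nat.sub_add_cancel (Fact.out : p.Prime).one_lt.le,
    ZMod.pow_card, sub_self]

theorem ZMod.inv_mul_prod_Icc_add_mul_prod_range_sub {p : ℕ} [Fact p.Prime] {d : ℕ} (hd0 : 0 < d)
    (hdp : d < p) (x y : ZMod p) :
    (d : ZMod p)⁻¹ * (∏ j ∈ Icc 1 d, (x + j)) * ∏ j ∈ range (p - d), (y - j) =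
      ((-1 - x).val.choose d * y.val.choose (p - d) : ℕ) := by
  set c := (-1 - x).val
  set b := y.val
  have hx : ∏ j ∈ Icc 1 d, (x + j) = (-1) ^ d * (d ! * c.choose d : ℕ) := by
    rw [prod_Icc_add_natCast_eq_neg_one_pow_mul_prod_range_sub, ← ZMod.natCast_zmod_val (-1 - x),
      prod_range_natCast_sub, ← Nat.descFactorial_eq_prod_range,
      Nat.descFactorial_eq_factorial_mul_choose]
  have hy : ∏ j ∈ range (p - d), (y - j) = ((p - d)! * b.choose (p - d) : ℕ) := by
    rw [← ZMod.natCast_zmod_val y, prod_range_natCast_sub, ← Nat.descFactorial_eq_prod_range,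
      Nat.descFactorial_eq_factorial_mul_choose]
  have hd : (d : ZMod p)⁻¹ * d ! = (d - 1)! := by
    have hne : (d : ZMod p) ≠ 0 := by
      rw [ne_eq, ZMod.natCast_eq_zero_iff]
      exact Nat.not_dvd_of_pos_of_lt hd0 hdp
    rw [← Nat.mul_factorial_pred hd0.ne', Nat.cast_mul, ← mul_assoc, inv_mul_cancel₀ hne, one_mul]
  have hsq : ((-1 : ZMod p) ^ d) ^ 2 = 1 := by rw [← pow_mul, mul_comm, pow_mul]; simp
  rw [hx, hy]
  push_cast
  linear_combination ((-1) ^ d * (p - d)! * c.choose d * b.choose (p - d) : ZMod p) * hd +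
    (c.choose d * b.choose (p - d) : ZMod p) *
      ((-1) ^ d * ZMod.factorial_pred_mul_factorial_sub hd0 hdp.le + hsq)

theorem ZMod.sum_Icc_inv_mul_prod_Icc_add_mul_prod_range_sub {p : ℕ} [Fact p.Prime] (hp3 : 3 ≤ p)
    (x y : ZMod p) :
    ∑ d ∈ Icc 2 (p - 2), (d : ZMod p)⁻¹ * (∏ j ∈ Icc 1 d, (x + j)) * ∏ j ∈ range (p - d), (y - j) =
      (((-1 - x).val + y.val) / p : ℕ) - (-1 - x) * (1 - (y + 1) ^ (p - 1)) -
        (1 - x ^ (p - 1)) * y := by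
  rw [sum_congr rfl fun d hd => ZMod.inv_mul_prod_Icc_add_mul_prod_range_sub
    (by grind) (by grind) x y]
  set c := (-1 - x).val
  set b := y.val
  have hc : c < p := ZMod.val_lt _
  have hb : b < p := ZMod.val_lt _
  have hvandermonde : (c + b).choose p =
      ∑ d ∈ Icc 2 (p - 2), c.choose d * b.choose (p - d) +
        (c * b.choose (p - 1) + c.choose (p - 1) * b) := by
    rw [Nat.add_choose_eq,
      Nat.sum_antidiagonal_eq_sum_range_succ (fun i j => c.choose i * b.choose j),
      sum_range_succ_eq_sum_Icc_add_ends _ (by omega), Nat.sub_zero, Nat.sub_self,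
      Nat.choose_eq_zero_of_lt hb, Nat.choose_eq_zero_of_lt hc, show p - (p - 1) = 1 by omega]
    simp
  have hcast := congrArg (Nat.cast : ℕ → ZMod p) hvandermonde
  push_cast at hcast
  rw [ZMod.natCast_choose_prime_eq_div, ZMod.natCast_choose_sub_one_eq hc,
    ZMod.natCast_choose_sub_one_eq hb, ZMod.natCast_zmod_val, ZMod.natCast_zmod_val,
    show -1 - x + 1 = -x by ring, neg_pow,
    ZMod.pow_card_sub_one_eq_one (a := -1) (by simp), one_mul] at hcast
  push_cast
  linear_combination -hcast

theorem ZMod.natCast_max_val {p : ℕ} [NeZero p] (x y : ZMod p) :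
    ((max x.val y.val : ℕ) : ZMod p) = x + (y - x) * (((-1 - x).val + y.val) / p : ℕ) := by
  have hx := ZMod.val_lt x
  have hy := ZMod.val_lt y
  have hval : (-1 - x).val = p - 1 - x.val := by
    rw [← ZMod.val_cast_of_lt (show p - 1 - x.val < p by omega)]
    congr 1
    rw [Nat.cast_sub (by omega), Nat.cast_sub (by omega)]
    simp
  rw [hval]
  rcases lt_or_ge x.val y.val with hlt | hle
  · rw [max_eq_right hlt.le, Nat.div_eq_of_lt_le (k := 1) (by omega) (by omega)]
    simp
  · rw [max_eq_left hle, Nat.div_eq_of_lt (by omega)]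
    simp

theorem max_two_variables (p : ℕ) (hp : p.Prime) (hp3 : 3 ≤ p) (x0 x1 : ZMod p) :
    fmax ![x0, x1] =
      (x1 - x0) *
          (∑ d ∈ Finset.Icc 2 (p - 2),
            (d : ZMod p)⁻¹ * (∏ j ∈ Finset.Icc 1 d, (x0 + (j : ZMod p))) *
              ∏ j ∈ Finset.range (p - d), (x1 - (j : ZMod p))) +
        x0 + (x0 + 1) ^ 2 * (1 - (x1 + 1) ^ (p - 1)) + (1 - x0 ^ (p - 1)) * x1 ^ 2 := by
  have := Fact.mk hp
  rw [fmax_pair, ZMod.natCast_max_val, ZMod.sum_Icc_inv_mul_prod_Icc_add_mul_prod_range_sub hp3]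
  linear_combination -(x0 + 1) * ZMod.mul_one_sub_pow_card_sub_one_eq_zero (x1 + 1) -
    x1 * ZMod.mul_one_sub_pow_card_sub_one_eq_zero x0
end

section
/- Let p be a prime, n ≥ 1, x = (x_0,…,x_{n−1}) ∈ 𝔽_p^n, and y ∈ 𝔽_p. Define ismax(y; x) = χ(max(x) = y) ∈ 𝔽_p. Then ismax(y; x) = Σ_{t=0}^{p−1} δ_t(y) · Σ_{i=0}^{n−1} ( Π_{j < i} L_t(x_j) · δ_t(x_i) · Π_{k > i} L_{t+1}(x_k) ) in 𝔽_p, where δ_t(z) = 1 − (z − t)^{p−1} and L_t(z) = Σ_{k=0}^{t−1} ( 1 − (z − k)^{p−1} ). -/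
lemma deltaP_apply {p : ℕ} (hp : p.Prime) (t : ℕ) (z : ZMod p) :
    deltaP p t z = if z = (t : ZMod p) then 1 else 0 := by
  haveI := Fact.mk hp
  unfold deltaP
  split_ifs with h
  · rw [h, sub_self, zero_pow (Nat.sub_ne_zero_of_lt hp.one_lt), sub_zero]
  · rw [ZMod.pow_card_sub_one_eq_one (sub_ne_zero.mpr h), sub_self]

lemma cast_eq_iff_val {p : ℕ} (hp : p.Prime) {k : ℕ} (hk : k < p) (z : ZMod p) :
    z = (k : ZMod p) ↔ z.val = k := by
  haveI := Fact.mk hp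
  constructor
  · rintro rfl; exact ZMod.val_cast_of_lt hk
  · rintro h; rw [← h, ZMod.natCast_val, ZMod.cast_id]

lemma Lp_apply {p : ℕ} (hp : p.Prime) {t : ℕ} (ht : t ≤ p) (z : ZMod p) :
    Lp p t z = if z.val < t then 1 else 0 := by
  unfold Lp
  have : ∀ k ∈ Finset.range t, (1 - (z - (k : ZMod p)) ^ (p - 1)) =
      if z.val = k then (1 : ZMod p) else 0 := by
    intro k hk
    rw [show (1 - (z - (k : ZMod p)) ^ (p - 1)) = deltaP p k z from rfl,
      deltaP_apply hp]
    simp [cast_eq_iff_val hp (lt_of_lt_of_le (Finset.mem_range.mp hk) ht)]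
  rw [Finset.sum_congr rfl this, Finset.sum_ite_eq (Finset.range t) z.val fun _ => (1:ZMod p)]
  simp

lemma key_sum {p n : ℕ} (hp : p.Prime) (hn : 1 ≤ n) (x : Fin n → ZMod p) {t : ℕ} (ht : t < p) :
    (∑ i : Fin n,
      ((∏ j ∈ Finset.univ.filter fun j => j < i, Lp p t (x j)) * deltaP p t (x i) *
        ∏ k ∈ Finset.univ.filter fun k => i < k, Lp p (t + 1) (x k))) =
      if (Finset.univ.sup fun i => (x i).val) = t then 1 else 0 := by
  have hterm : ∀ i : Fin n,
      ((∏ j ∈ Finset.univ.filter fun j => j < i, Lp p t (x j)) * deltaP p t (x i) *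
        ∏ k ∈ Finset.univ.filter fun k => i < k, Lp p (t + 1) (x k)) =
      if (∀ j, j < i → (x j).val < t) ∧ (x i).val = t ∧ (∀ k, i < k → (x k).val < t + 1)
        then 1 else 0 := by
    intro i
    rw [Finset.prod_congr rfl fun j _ => Lp_apply hp ht.le (x j),
      Finset.prod_congr rfl fun k _ => Lp_apply hp ht (x k),
      deltaP_apply hp, Finset.prod_boole, Finset.prod_boole]
    simp only [Finset.mem_filter, Finset.mem_univ, true_and,
      cast_eq_iff_val hp ht]
    split_ifs with h1 h2 h3 h4 <;>
      simp_all <;> tauto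
  rw [Finset.sum_congr rfl fun i _ => hterm i]
  by_cases hM : (Finset.univ.sup fun i => (x i).val) = t
  · rw [if_pos hM]
    haveI : NeZero n := ⟨by omega⟩
    have hs : (Finset.univ.filter fun i : Fin n => (x i).val = t).Nonempty := by
      obtain ⟨i, hi⟩ := Finset.exists_mem_eq_sup Finset.univ
        (Finset.univ_nonempty) (fun i : Fin n => (x i).val)
      exact ⟨i, Finset.mem_filter.mpr ⟨Finset.mem_univ _, by rw [← hi.2, hM]⟩⟩
    set s := Finset.univ.filter fun i : Fin n => (x i).val = t with hsdef
    set i₀ := s.min' hs with hi₀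
    have hi₀mem := s.min'_mem hs
    have hi₀t : (x i₀).val = t := (Finset.mem_filter.mp hi₀mem).2
    have hQ : (∀ j, j < i₀ → (x j).val < t) ∧ (x i₀).val = t ∧
        (∀ k, i₀ < k → (x k).val < t + 1) := by
      refine ⟨fun j hj => ?_, hi₀t, fun k _ => ?_⟩
      · have hle : (x j).val ≤ t := hM ▸ Finset.le_sup (f := fun i => (x i).val) (Finset.mem_univ j)
        rcases lt_or_eq_of_le hle with h | h
        · exact h
        · exact absurd (Finset.min'_le s j (Finset.mem_filter.mpr ⟨Finset.mem_univ _, h⟩))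
            (not_le.mpr hj)
      · have : (x k).val ≤ t := hM ▸ Finset.le_sup (f := fun i => (x i).val) (Finset.mem_univ k)
        omega
    rw [Finset.sum_eq_single_of_mem i₀ (Finset.mem_univ _)]
    · rw [if_pos hQ]
    · intro i _ hne
      rw [if_neg]
      rintro ⟨h1, h2, h3⟩
      rcases lt_trichotomy i i₀ with h | h | h
      · exact absurd (Finset.min'_le s i (Finset.mem_filter.mpr ⟨Finset.mem_univ _, h2⟩))
          (not_le.mpr h)
      · exact hne (by exact_mod_cast h)
      · exact absurd hi₀t (Nat.ne_of_lt (h1 i₀ h))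
  · rw [if_neg hM, Finset.sum_eq_zero]
    intro i _
    rw [if_neg]
    rintro ⟨h1, h2, h3⟩
    apply hM
    apply le_antisymm
    · apply Finset.sup_le
      intro j _
      rcases lt_trichotomy j i with h | h | h
      · exact (h1 j h).le
      · rw [h, h2]
      · exact Nat.lt_succ_iff.mp (h3 j h)
    · exact h2 ▸ Finset.le_sup (f := fun i => (x i).val) (Finset.mem_univ i)

theorem ismax_formula (p n : ℕ) (hp : p.Prime) (hn : 1 ≤ n)
    (x : Fin n → ZMod p) (y : ZMod p) :
    (if fmax x = y then (1 : ZMod p) else 0) =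
      ∑ t ∈ Finset.range p, deltaP p t y *
        ∑ i : Fin n,
          ((∏ j ∈ Finset.univ.filter fun j => j < i, Lp p t (x j)) * deltaP p t (x i) *
            ∏ k ∈ Finset.univ.filter fun k => i < k, Lp p (t + 1) (x k)) := by
  haveI := Fact.mk hp
  have hM : (Finset.univ.sup fun i => (x i).val) < p := by
    apply Finset.sup_lt_iff (by simpa using hp.pos) |>.mpr
    intro i _
    exact ZMod.val_lt (x i)
  rw [Finset.sum_congr rfl fun t htm => by
    rw [deltaP_apply hp, key_sum hp hn x (Finset.mem_range.mp htm)]]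
  rw [Finset.sum_eq_single_of_mem y.val (Finset.mem_range.mpr (ZMod.val_lt y))]
  · rw [if_pos ((cast_eq_iff_val hp (ZMod.val_lt y) y).mpr rfl), one_mul]
    unfold fmax
    have hiff : ((Finset.univ.sup fun i => (x i).val : ℕ) : ZMod p) = y ↔
        (Finset.univ.sup fun i => (x i).val) = y.val := by
      rw [eq_comm, cast_eq_iff_val hp hM y, eq_comm]
    simp only [hiff]
  · intro t ht hne
    rw [if_neg, zero_mul]
    intro h
    exact hne ((cast_eq_iff_val hp (Finset.mem_range.mp ht) y).mp h).symm
end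

section
/- Let p be a prime, n ≥ 1, and x = (x_0,…,x_{n−1}) ∈ 𝔽_p^n. Let nummax^{(0)}(x) ∈ 𝔽_p be the residue mod p of the number of indices i with x_i = max(x). Then nummax^{(0)}(x) = Σ_{i=0}^{n−1} Σ_{t=0}^{p−1} ( δ_t(x_i) · Π_{j ≠ i} L_{t+1}(x_j) ) in 𝔽_p, where δ_t(z) = 1 − (z − t)^{p−1} and L_t(z) = Σ_{k=0}^{t−1} ( 1 − (z − k)^{p−1} ). -/
theorem nummax_zero_formula (p n : ℕ) (hp : p.Prime) (hn : 1 ≤ n)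
    (x : Fin n → ZMod p) :
    (((Finset.univ.filter fun i => x i = fmax x).card : ℕ) : ZMod p) =
      ∑ i : Fin n, ∑ t ∈ Finset.range p,
        (deltaP p t (x i) * ∏ j ∈ Finset.univ.filter fun j => j ≠ i, Lp p (t + 1) (x j)) := by
  haveI : Fact p.Prime := ⟨hp⟩
  have hdelta : ∀ (t : ℕ) (z : ZMod p), t < p →
      deltaP p t z = if z.val = t then 1 else 0 := by
    intro t z ht
    unfold deltaP
    by_cases h : z = (t : ZMod p)
    · rw [if_pos (by rw [h, ZMod.val_natCast_of_lt ht]), h, sub_self,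
        zero_pow (by have := hp.one_lt; omega), sub_zero]
    · rw [if_neg (fun hc => h (by rw [← hc]; simp [ZMod.natCast_val, ZMod.cast_id])),
        ZMod.pow_card_sub_one_eq_one (sub_ne_zero.mpr h), sub_self]
  have hLp : ∀ (t : ℕ) (z : ZMod p), t ≤ p →
      Lp p t z = if z.val < t then 1 else 0 := by
    intro t z ht
    unfold Lp
    have hrfl : (∑ k ∈ Finset.range t, (1 - (z - (k:ZMod p))^(p-1))) = ∑ k ∈ Finset.range t, deltaP p k z := rfl
    rw [hrfl, Finset.sum_congr rfl (fun k hk =>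
      hdelta k z (lt_of_lt_of_le (Finset.mem_range.mp hk) ht))]
    simp [Finset.sum_ite_eq, Finset.mem_range]
  have hmax : ∀ i : Fin n, (x i = fmax x ↔ ∀ j : Fin n, (x j).val ≤ (x i).val) := by
    intro i
    have hne : (Finset.univ : Finset (Fin n)).Nonempty :=
      Finset.univ_nonempty_iff.mpr ⟨⟨0, hn⟩⟩
    have hsup : (Finset.univ.sup fun j => (x j).val) < p := by
      obtain ⟨j, -, hj⟩ := Finset.exists_mem_eq_sup _ hne (fun j => (x j).val)
      rw [hj]; exact ZMod.val_lt _
    constructor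
    · intro h j
      have hv : (x i).val = Finset.univ.sup fun j => (x j).val := by
        rw [h]; unfold fmax; rw [ZMod.val_natCast_of_lt hsup]
      rw [hv]; exact Finset.le_sup (f := fun j => (x j).val) (Finset.mem_univ j)
    · intro h
      have h1 : (Finset.univ.sup fun j => (x j).val) = (x i).val :=
        le_antisymm (Finset.sup_le fun j _ => h j) (Finset.le_sup (f := fun j => (x j).val) (Finset.mem_univ i))
      unfold fmax
      rw [h1]
      simp [ZMod.natCast_val, ZMod.cast_id]
  have hs : ∀ i : Fin n,
      (∑ t ∈ Finset.range p,
        (deltaP p t (x i) * ∏ j ∈ Finset.univ.filter fun j => j ≠ i, Lp p (t + 1) (x j)))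
      = if x i = fmax x then 1 else 0 := by
    intro i
    have step1 : ∀ t ∈ Finset.range p,
        deltaP p t (x i) * (∏ j ∈ Finset.univ.filter fun j => j ≠ i, Lp p (t + 1) (x j))
        = if (x i).val = t then (∏ j ∈ Finset.univ.filter fun j => j ≠ i, Lp p (t + 1) (x j)) else 0 := by
      intro t ht
      rw [hdelta t (x i) (Finset.mem_range.mp ht), ite_mul, one_mul, zero_mul]
    rw [Finset.sum_congr rfl step1, Finset.sum_ite_eq, if_pos (Finset.mem_range.mpr (ZMod.val_lt _))]
    by_cases h : x i = fmax x
    · rw [if_pos h]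
      apply Finset.prod_eq_one
      intro j hj
      rw [hLp _ _ (Nat.succ_le_of_lt (ZMod.val_lt (x i)))]
      exact if_pos (Nat.lt_succ_of_le ((hmax i).mp h j))
    · rw [if_neg h]
      obtain ⟨j, hj⟩ := not_forall.mp (fun hall => h ((hmax i).mpr hall))
      have hji : j ≠ i := fun e => hj (e ▸ le_refl _)
      apply Finset.prod_eq_zero (Finset.mem_filter.mpr ⟨Finset.mem_univ j, hji⟩)
      rw [hLp _ _ (Nat.succ_le_of_lt (ZMod.val_lt (x i)))]
      exact if_neg (by omega)
  rw [Finset.sum_congr rfl (fun i _ => hs i)]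
  rw [Finset.card_filter]
  push_cast
  simp
end

section
/- Let p = 3, n ≥ 1, x = (x_0,…,x_{n−1}) ∈ 𝔽_3^n, and y ∈ 𝔽_3. Then ismax(y; x) = −y^2 + y·( Π_{i=0}^{n−1} (1 + x_i)^2 + Π_{i=0}^{n−1} (1 − x_i^2) + 1 ) + Π_{i=0}^{n−1} (1 − x_i^2) in 𝔽_3, where ismax(y; x) = χ(max(x) = y). -/
theorem ismax_p_three (n : ℕ) (hn : 1 ≤ n) (x : Fin n → ZMod 3) (y : ZMod 3) :
    (if fmax x = y then (1 : ZMod 3) else 0) =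
      -y ^ 2 + y * ((∏ i, (1 + x i) ^ 2) + (∏ i, (1 - (x i) ^ 2)) + 1) +
        ∏ i, (1 - (x i) ^ 2) := by
  have hval2 : ∀ a : ZMod 3, a.val ≤ 2 := by decide
  by_cases h0 : ∀ i, x i = 0
  · have hS : (Finset.univ.sup fun i => (x i).val) = 0 :=
      Nat.le_zero.mp (Finset.sup_le fun i _ => by rw [h0 i]; exact le_refl 0)
    have hf : fmax x = 0 := by rw [fmax, hS]; rfl
    have hA : (∏ i, (1 + x i) ^ 2) = 1 :=
      Finset.prod_eq_one fun i _ => by rw [h0 i]; decide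
    have hB : (∏ i, (1 - (x i) ^ 2)) = 1 :=
      Finset.prod_eq_one fun i _ => by rw [h0 i]; decide
    rw [hf, hA, hB]; revert y; decide
  · push_neg at h0
    obtain ⟨j, hj⟩ := h0
    by_cases h2 : ∃ i, x i = 2
    · obtain ⟨k, hk⟩ := h2
      have hS : (Finset.univ.sup fun i => (x i).val) = 2 := by
        refine le_antisymm (Finset.sup_le fun i _ => hval2 _) ?_
        have := Finset.le_sup (f := fun i => (x i).val) (Finset.mem_univ k)
        simp only [hk] at this
        exact le_trans (by decide) this
      have hf : fmax x = 2 := by rw [fmax, hS]; rfl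
      have hA : (∏ i, (1 + x i) ^ 2) = 0 :=
        Finset.prod_eq_zero (Finset.mem_univ k) (by rw [hk]; decide)
      have hB : (∏ i, (1 - (x i) ^ 2)) = 0 :=
        Finset.prod_eq_zero (Finset.mem_univ k) (by rw [hk]; decide)
      rw [hf, hA, hB]; revert y; decide
    · push_neg at h2
      have key1 : ∀ a : ZMod 3, a ≠ 0 → a ≠ 2 → a = 1 := by decide
      have key2 : ∀ a : ZMod 3, a ≠ 2 → a.val ≤ 1 := by decide
      have key3 : ∀ a : ZMod 3, a ≠ 2 → (1 + a) ^ 2 = 1 := by decide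
      have hj1 : x j = 1 := key1 _ hj (h2 j)
      have hS : (Finset.univ.sup fun i => (x i).val) = 1 := by
        refine le_antisymm (Finset.sup_le fun i _ => ?_) ?_
        · exact key2 _ (h2 i)
        · have := Finset.le_sup (f := fun i => (x i).val) (Finset.mem_univ j)
          simp only [hj1] at this
          exact le_trans (by decide) this
      have hf : fmax x = 1 := by rw [fmax, hS]; rfl
      have hA : (∏ i, (1 + x i) ^ 2) = 1 := by
        exact Finset.prod_eq_one fun i _ => key3 _ (h2 i)
      have hB : (∏ i, (1 - (x i) ^ 2)) = 0 :=
        Finset.prod_eq_zero (Finset.mem_univ j) (by rw [hj1]; decide)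
      rw [hf, hA, hB]; revert y; decide
end

section
/- Let p = 2 and n ≥ 1. For y_1, y_0 ∈ 𝔽_2 and x_{i,1}, x_{i,0} ∈ 𝔽_2 (0 ≤ i ≤ n−1), consider the two-bit integers y = 2·y_1 + y_0 ∈ {0,1,2,3} and x_i = 2·x_{i,1} + x_{i,0} ∈ {0,1,2,3} (where the bits are interpreted as the integers 0 or 1). Let ismax(y; x_0,…,x_{n−1}) ∈ 𝔽_2 equal 1 if the integer maximum of x_0,…,x_{n−1} equals the integer y, and 0 otherwise. Then ismax(y; x_0,…,x_{n−1}) = y_1 y_0 + y_1 · Π_{i=0}^{n−1} (1 + x_{i,1} x_{i,0}) + (y_1 + y_0) · Π_{i=0}^{n−1} (1 + x_{i,1}) + (y_1 + 1) · Π_{i=0}^{n−1} (1 + x_{i,1})(1 + x_{i,0}) in 𝔽_2. -/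
private lemma prod_ind {n : ℕ} (f : Fin n → ZMod 2) :
    (∏ i, f i) = if ∀ i, f i = 1 then 1 else 0 := by
  split
  · exact Finset.prod_eq_one (fun i _ => ‹∀ i, f i = 1› i)
  · next h =>
    push_neg at h
    obtain ⟨i, hi⟩ := h
    have h0 : f i = 0 := by
      have : ∀ a : ZMod 2, a ≠ 1 → a = 0 := by decide
      exact this _ hi
    exact Finset.prod_eq_zero (Finset.mem_univ i) h0

theorem ismax_two_bit_p_two (n : ℕ) (hn : 1 ≤ n) (y1 y0 : ZMod 2)
    (x1 x0 : Fin n → ZMod 2) :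
    (if (Finset.univ.sup fun i => 2 * (x1 i).val + (x0 i).val) = 2 * y1.val + y0.val
        then (1 : ZMod 2) else 0) =
      y1 * y0 + y1 * (∏ i, (1 + x1 i * x0 i)) + (y1 + y0) * (∏ i, (1 + x1 i)) +
        (y1 + 1) * ∏ i, ((1 + x1 i) * (1 + x0 i)) := by
  classical
  set v : Fin n → ℕ := fun i => 2 * (x1 i).val + (x0 i).val with hvdef
  have hne : (Finset.univ : Finset (Fin n)).Nonempty := ⟨⟨0, hn⟩, Finset.mem_univ _⟩
  obtain ⟨j, -, hj⟩ := Finset.exists_mem_eq_sup Finset.univ hne v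
  have hle : ∀ i, v i ≤ Finset.univ.sup v := fun i => Finset.le_sup (Finset.mem_univ i)
  have hvb : ∀ a : ZMod 2, a.val ≤ 1 := by decide
  have hb : ∀ i, v i ≤ 3 := fun i => by
    have := hvb (x1 i); have := hvb (x0 i); simp only [hvdef]; omega
  -- element-level conversions
  have eA : ∀ i, (1 + x1 i * x0 i = 1) ↔ v i ≤ 2 := fun i => by
    have : ∀ p q : ZMod 2, (1 + p * q = 1) ↔ 2 * p.val + q.val ≤ 2 := by decide
    exact this _ _
  have eB : ∀ i, (1 + x1 i = 1) ↔ v i ≤ 1 := fun i => by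
    have : ∀ p q : ZMod 2, (1 + p = 1) ↔ 2 * p.val + q.val ≤ 1 := by decide
    exact this _ _
  have eC : ∀ i, ((1 + x1 i) * (1 + x0 i) = 1) ↔ v i = 0 := fun i => by
    have : ∀ p q : ZMod 2, ((1 + p) * (1 + q) = 1) ↔ 2 * p.val + q.val = 0 := by decide
    exact this _ _
  have pA : (∏ i, (1 + x1 i * x0 i)) = if ∀ i, v i ≤ 2 then 1 else 0 := by
    rw [prod_ind]; simp only [eA]
  have pB : (∏ i, (1 + x1 i)) = if ∀ i, v i ≤ 1 then 1 else 0 := by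
    rw [prod_ind]; simp only [eB]
  have pC : (∏ i, ((1 + x1 i) * (1 + x0 i))) = if ∀ i, v i = 0 then 1 else 0 := by
    rw [prod_ind]; simp only [eC]
  have hBA : (∀ i, v i ≤ 1) → (∀ i, v i ≤ 2) := fun h i => le_trans (h i) (by norm_num)
  have hCB : (∀ i, v i = 0) → (∀ i, v i ≤ 1) := fun h i => by rw [h i]; norm_num
  have hM3 : Finset.univ.sup v = 3 ↔ ¬ (∀ i, v i ≤ 2) := by
    constructor
    · intro h hall
      have := hall j; omega
    · intro h
      push_neg at h
      obtain ⟨i, hi⟩ := h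
      have h1 := hle i; have h2 := hb i; have h3 := hb j
      omega
  have hM2 : Finset.univ.sup v = 2 ↔ ((∀ i, v i ≤ 2) ∧ ¬ (∀ i, v i ≤ 1)) := by
    constructor
    · intro h
      refine ⟨fun i => by have := hle i; omega, fun hall => by have := hall j; omega⟩
    · rintro ⟨h1, h2⟩
      push_neg at h2
      obtain ⟨i, hi⟩ := h2
      have ha := hle i; have hc := h1 j; have hd := h1 i
      omega
  have hM1 : Finset.univ.sup v = 1 ↔ ((∀ i, v i ≤ 1) ∧ ¬ (∀ i, v i = 0)) := by
    constructor
    · intro h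
      refine ⟨fun i => by have := hle i; omega, fun hall => by have := hall j; omega⟩
    · rintro ⟨h1, h2⟩
      push_neg at h2
      obtain ⟨i, hi⟩ := h2
      have ha := hle i; have hc := h1 j; have hd := h1 i
      omega
  have hM0 : Finset.univ.sup v = 0 ↔ (∀ i, v i = 0) := by
    constructor
    · intro h i; have := hle i; omega
    · intro h; have := h j; omega
  have h20 : (2 : ZMod 2) = 0 := by decide
  rw [pA, pB, pC]
  have hZ : ∀ a : ZMod 2, a = 0 ∨ a = 1 := by decide
  rcases hZ y1 with h1 | h1 <;> rcases hZ y0 with h0 | h0 <;> subst h1 <;> subst h0 <;>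
    simp only [ZMod.val_zero, ZMod.val_one] <;> norm_num
  · -- y = 1
    simp only [hM1]
    by_cases hC : ∀ i, v i = 0
    · have hB := hCB hC
      simp [hB, hC, h20] <;> decide
    · by_cases hB : ∀ i, v i ≤ 1 <;> simp [hB, hC, h20] <;> decide
  · -- y = 2
    simp only [hM2]
    by_cases hB : ∀ i, v i ≤ 1
    · have hA := hBA hB
      simp [hA, hB, h20] <;> decide
    · by_cases hA : ∀ i, v i ≤ 2 <;> simp [hA, hB, h20] <;> decide
  · -- y = 3
    simp only [hM3]
    by_cases hA : ∀ i, v i ≤ 2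
    · by_cases hB : ∀ i, v i ≤ 1
      · by_cases hC : ∀ i, v i = 0 <;> simp [hA, hB, hC, h20] <;> decide
      · have hC : ¬∀ i, v i = 0 := fun h => hB (hCB h)
        simp [hA, hB, hC, h20] <;> decide
    · have hB : ¬∀ i, v i ≤ 1 := fun h => hA (hBA h)
      have hC : ¬∀ i, v i = 0 := fun h => hB (hCB h)
      simp [hA, hB, hC, h20] <;> decide
end
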